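/- arXiv:1011.0366 — 2 statements merged into one kernel-verified Lean document; each statement's English description precedes it below -/
import Mathlib

section
/- For any nonnegative integers m and t with t ≤ binomial(m+1,2), the sum over strict partitions λ contained (as sets) in {1,...,m} with |λ| = t of g^λ * g^{λᶜ} equals g^{[m]}, where λᶜ is the set complement of λ in {1,...,m}. In particular, this sum is independent of t. -/
/-!
Cut a standard tableau of the staircase `[m] = {(i, j) | i ≤ j < m}` at the value `t`. The cells
with entries `≤ t` form an order ideal of the staircase, hence (reading off the lengths of its
diagonals, which drop by `0` or `1` at each step) the shifted diagram of a strict partition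
`λ ⊆ [m]` with `|λ| = t`. The remaining cells, reflected in the anti-diagonal
`(i, j) ↦ (m - 1 - j, m - 1 - i)`, form exactly the shifted diagram of `λᶜ`, and reversing
their entries turns them into a standard tableau of that shape. This is a bijection between
tableaux of shape `[m]` and pairs of tableaux of shapes `λ`, `λᶜ` with `|λ| = t`.
-/

open Finset

/-- Cells of the ordinary Young diagram with row lengths given by the list `L`
(row `i`, columns `0,…,L_i-1`). -/
def shapeCells (L : List ℕ) : Finset (ℕ × ℕ) :=
  (Finset.range L.length).biUnion fun i =>
    (Finset.range (L.getD i 0)).image fun j => (i, j)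

/-- Cells of the shifted Young diagram with row lengths `L` (row `i` indented `i` places). -/
def shiftedCells (L : List ℕ) : Finset (ℕ × ℕ) :=
  (Finset.range L.length).biUnion fun i =>
    (Finset.range (L.getD i 0)).image fun j => (i, i + j)

/-- `T` is a standard Young tableau filling of the cell set `S`: a bijection onto
`{1,…,|S|}`, zero outside `S`, increasing along rows and down columns. -/
def IsSYT (S : Finset (ℕ × ℕ)) (T : ℕ × ℕ → ℕ) : Prop :=
  Set.BijOn T ↑S (Set.Icc 1 S.card) ∧ (∀ c, c ∉ S → T c = 0) ∧
  (∀ c ∈ S, (c.1, c.2 + 1) ∈ S → T c < T (c.1, c.2 + 1)) ∧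
  (∀ c ∈ S, (c.1 + 1, c.2) ∈ S → T c < T (c.1 + 1, c.2))

/-- A standard Young tableau which moreover increases down the main diagonal. -/
def IsSYTD (S : Finset (ℕ × ℕ)) (T : ℕ × ℕ → ℕ) : Prop :=
  IsSYT S T ∧ ∀ c ∈ S, c.1 = c.2 → (c.1 + 1, c.2 + 1) ∈ S → T c < T (c.1 + 1, c.2 + 1)

/-- The number of standard Young tableaux of a given cell set. -/
noncomputable def numSYT (S : Finset (ℕ × ℕ)) : ℕ :=
  Nat.card {T : ℕ × ℕ → ℕ // IsSYT S T}

/-- The number of standard Young tableaux (with the diagonal condition) of a cell set. -/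
noncomputable def numSYTD (S : Finset (ℕ × ℕ)) : ℕ :=
  Nat.card {T : ℕ × ℕ → ℕ // IsSYTD S T}

/-- The staircase list `(m, m-1, …, 1)`. -/
def stair (m : ℕ) : List ℕ := (List.range m).map fun i => m - i

/-- Sort a finite set of parts into a strictly decreasing list. -/
def sortDesc (s : Finset ℕ) : List ℕ := (s.sort (· ≤ ·)).reverse

/-- Number of SYT of the shifted shape whose set of parts is `s`. -/
noncomputable def gF (s : Finset ℕ) : ℕ := numSYT (shiftedCells (sortDesc s))

/-- Number of SYT of the ordinary shape with row lengths `L`. -/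
noncomputable def fL (L : List ℕ) : ℕ := numSYT (shapeCells L)

noncomputable def hg (s : Finset ℕ) : ℚ := (gF s : ℚ) / ((s.sum id).factorial : ℚ)

noncomputable def hf (L : List ℕ) : ℚ := (fL L : ℚ) / ((L.sum).factorial : ℚ)

/-- Superfactorial `F_j = 0! 1! ⋯ (j-1)!`. -/
def sf (j : ℕ) : ℕ := ∏ i ∈ Finset.range j, i.factorial

/-- The partition `μ + (c^k)`, as a list of `k` parts. -/
def addc (MU : List ℕ) (k c : ℕ) : List ℕ := (List.range k).map fun i => MU.getD i 0 + c

/-- The partition with `m` parts whose associated strict partition `λ + (m,…,1)`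
has set of parts `s`. -/
def partOf (m : ℕ) (s : Finset ℕ) : List ℕ :=
  (List.range m).map fun i => (sortDesc s).getD i 0 - (m - i)

def partsGt (s : Finset ℕ) (d : ℕ) : ℕ := #{x ∈ s | d < x}

section PartsGt

variable {s s' : Finset ℕ}

lemma partsGt_eq_succ (s : Finset ℕ) (d : ℕ) :
    partsGt s d = partsGt s (d + 1) + if d + 1 ∈ s then 1 else 0 := by
  have h : {x ∈ s | d < x} = {x ∈ s | d + 1 < x} ∪ {x ∈ s | x = d + 1} := by
    ext x; by_cases hx : x ∈ s <;> simp only [mem_filter, mem_union, hx, true_and, false_and,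
      or_false]; omega
  rw [partsGt, h, card_union_of_disjoint (disjoint_filter.2 fun _ _ _ _ => by omega), filter_eq',
    partsGt]
  split_ifs <;> simp

lemma partsGt_antitone (s : Finset ℕ) : Antitone (partsGt s) :=
  fun _ _ h => card_le_card (monotone_filter_right s fun _ _ hx => lt_of_le_of_lt h hx)

lemma partsGt_mono {d : ℕ} (h : s ⊆ s') : partsGt s d ≤ partsGt s' d :=
  card_le_card (filter_subset_filter _ h)

lemma partsGt_Icc (m d : ℕ) : partsGt (Icc 1 m) d = m - d := by
  rw [partsGt, show {x ∈ Icc 1 m | d < x} = Icc (d + 1) m by ext; simp; omega, Nat.card_Icc]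
  omega

lemma partsGt_Icc_sdiff {m : ℕ} (hs : s ⊆ Icc 1 m) (d : ℕ) :
    partsGt (Icc 1 m \ s) d = m - d - partsGt s d := by
  rw [← partsGt_Icc m d, partsGt, partsGt, partsGt,
    ← card_sdiff_of_subset (filter_subset_filter _ hs)]
  congr 1; ext; simp only [mem_filter, mem_sdiff]; tauto

lemma partsGt_le {m : ℕ} (hs : s ⊆ Icc 1 m) (d : ℕ) : partsGt s d ≤ m - d :=
  partsGt_Icc m d ▸ partsGt_mono hs

lemma eq_of_partsGt_eq (hs : 0 ∉ s) (hs' : 0 ∉ s') (h : partsGt s = partsGt s') : s = s' := by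
  ext x
  rcases x with _ | x
  · simp only [hs, hs']
  · have e := partsGt_eq_succ s x
    have e' := partsGt_eq_succ s' x
    rw [h] at e
    by_cases hx : x + 1 ∈ s <;> by_cases hx' : x + 1 ∈ s' <;> simp only [hx, hx', if_true,
      if_false] at e e' ⊢ <;> omega

lemma exists_partsGt_eq {m : ℕ} (c : ℕ → ℕ) (hc : ∀ d, c (d + 1) ≤ c d ∧ c d ≤ c (d + 1) + 1)
    (hm : c m = 0) : ∃ s ⊆ Icc 1 m, partsGt s = c := by
  have hanti : Antitone c := antitone_nat_of_succ_le fun d => (hc d).1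
  set s := {x ∈ Icc 1 m | c x < c (x - 1)}
  have hs : s ⊆ Icc 1 m := filter_subset _ _
  refine ⟨s, hs, funext fun d => ?_⟩
  rcases le_or_gt m d with hd | hd
  · have := partsGt_le hs d
    have := hanti hd
    omega
  · refine Nat.decreasingInduction (motive := fun d _ => partsGt s d = c d) (fun k _ ih => ?_)
      ?_ hd.le
    · have := hc k
      rw [partsGt_eq_succ, ih]
      simp only [s, mem_filter, mem_Icc, Nat.add_sub_cancel]
      split_ifs <;> omega
    · have := partsGt_le hs m
      omega

end PartsGt

lemma lt_length_and_lt_getD_iff {l : List ℕ} (hl : l.Pairwise (· > ·)) (i v : ℕ) :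
    (i < l.length ∧ v < l.getD i 0) ↔ i < l.countP (v < ·) := by
  induction l generalizing i with
  | nil => simp
  | cons a l ih =>
    rw [List.pairwise_cons] at hl
    by_cases hva : v < a
    · rw [List.countP_cons_of_pos (by simpa using hva)]
      cases i with
      | zero => simpa using hva
      | succ i => simpa using ih hl.2 i
    · have hl0 : l.countP (v < ·) = 0 :=
        List.countP_eq_zero.2 fun x hx => by have := hl.1 x hx; simp only [decide_eq_true_eq]; omega
      rw [List.countP_cons_of_neg (by simpa using hva), hl0]
      cases i with
      | zero => simpa using hva
      | succ i =>
        simp only [List.length_cons, List.getD_cons_succ, Nat.not_lt_zero, iff_false, not_and]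
        intro hi
        have hi : i < l.length := by omega
        have := hl.1 (l.getD i 0) (List.getD_eq_getElem l 0 hi ▸ List.getElem_mem hi)
        omega

lemma mem_shiftedCells {L : List ℕ} {i j : ℕ} :
    (i, j) ∈ shiftedCells L ↔ i < L.length ∧ i ≤ j ∧ j - i < L.getD i 0 := by
  simp only [shiftedCells, mem_biUnion, mem_range, mem_image, Prod.mk.injEq]
  constructor
  · rintro ⟨i, hi, k, hk, rfl, rfl⟩
    simpa using ⟨hi, hk⟩
  · rintro ⟨hi, hij, hk⟩
    exact ⟨i, hi, j - i, hk, rfl, by omega⟩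

lemma card_shiftedCells (L : List ℕ) : #(shiftedCells L) = L.sum := by
  rw [shiftedCells, card_biUnion, ← Fin.sum_univ_getElem, ← Fin.sum_univ_eq_sum_range]
  · refine Finset.sum_congr rfl fun i _ => ?_
    rw [card_image_of_injective _ fun _ _ h => by simpa using h, card_range,
      List.getD_eq_getElem _ _ i.2]
  · intro i _ i' _ hii'
    simp only [disjoint_left, mem_image]
    rintro _ ⟨_, _, rfl⟩ ⟨_, _, h⟩
    exact hii' (Prod.mk.inj h).1.symm

lemma countP_sortDesc (s : Finset ℕ) (p : ℕ → Prop) [DecidablePred p] :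
    (sortDesc s).countP (fun x => decide (p x)) = #{x ∈ s | p x} := by
  rw [sortDesc, List.countP_reverse, ← Multiset.coe_countP, Finset.sort_eq,
    Multiset.countP_eq_card_filter]
  rfl

def shiftedDiagram (s : Finset ℕ) : Finset (ℕ × ℕ) := shiftedCells (sortDesc s)

lemma mem_shiftedDiagram {s : Finset ℕ} {i j : ℕ} :
    (i, j) ∈ shiftedDiagram s ↔ i ≤ j ∧ i < partsGt s (j - i) := by
  have hsorted : (sortDesc s).Pairwise (· > ·) := by
    rw [sortDesc, List.pairwise_reverse]
    exact s.sortedLT_sort.pairwise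
  rw [shiftedDiagram, mem_shiftedCells, partsGt, ← countP_sortDesc,
    ← lt_length_and_lt_getD_iff hsorted]
  tauto

section ShiftedDiagram

variable {s s' : Finset ℕ} {m : ℕ}

lemma card_shiftedDiagram (s : Finset ℕ) : #(shiftedDiagram s) = s.sum id := by
  rw [shiftedDiagram, card_shiftedCells, sortDesc, List.sum_reverse, ← Multiset.sum_coe,
    Finset.sort_eq, Finset.sum_eq_multiset_sum, Multiset.map_id]

lemma mem_shiftedDiagram_Icc {i j : ℕ} : (i, j) ∈ shiftedDiagram (Icc 1 m) ↔ i ≤ j ∧ j < m := by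
  rw [mem_shiftedDiagram, partsGt_Icc]
  omega

lemma shiftedDiagram_mono (h : s ⊆ s') : shiftedDiagram s ⊆ shiftedDiagram s' := by
  rintro ⟨i, j⟩
  simp only [mem_shiftedDiagram]
  exact fun ⟨hij, hi⟩ => ⟨hij, hi.trans_le (partsGt_mono h)⟩

lemma shiftedDiagram_injOn : Set.InjOn shiftedDiagram {s | 0 ∉ s} := by
  intro s hs s' hs' h
  refine eq_of_partsGt_eq hs hs' (funext fun d => eq_of_forall_lt_iff fun i => ?_)
  have e := congrArg ((i, i + d) ∈ ·) h
  simpa only [mem_shiftedDiagram, Nat.add_sub_cancel_left, Nat.le_add_right, true_and] using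
    Iff.of_eq e

def NextCell (c c' : ℕ × ℕ) : Prop := c' = (c.1, c.2 + 1) ∨ c' = (c.1 + 1, c.2)

def IsLowerIn (U S : Finset (ℕ × ℕ)) : Prop := ∀ c ∈ S, ∀ c' ∈ U, NextCell c c' → c ∈ U

lemma shiftedDiagram_isLowerIn (s : Finset ℕ) (m : ℕ) :
    IsLowerIn (shiftedDiagram s) (shiftedDiagram (Icc 1 m)) := by
  rintro ⟨i, j⟩ hc c' hc' (rfl | rfl) <;> dsimp only at hc' <;> rw [mem_shiftedDiagram] at hc' ⊢
  · have := partsGt_antitone s (show j - i ≤ j + 1 - i by omega)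
    have := (mem_shiftedDiagram_Icc.1 hc).1
    exact ⟨this, by omega⟩
  · have := partsGt_eq_succ s (j - (i + 1))
    rw [show j - (i + 1) + 1 = j - i by omega] at this
    split_ifs at this <;> omega

lemma mem_iff_lt_card_of_pred_mem {J : Finset ℕ} (h : ∀ i, i + 1 ∈ J → i ∈ J) (i : ℕ) :
    i ∈ J ↔ i < #J := by
  have down : ∀ j, j ∈ J → ∀ i ≤ j, i ∈ J := by
    intro j hj i hij
    induction j, hij using Nat.le_induction with
    | base => exact hj
    | succ j _ ih => exact ih (h j hj)
  constructor
  · intro hi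
    simpa using card_le_card fun k hk => down i hi k (Nat.lt_succ_iff.1 (mem_range.1 hk))
  · intro hi
    by_contra hni
    have : J ⊆ range i := fun j hj =>
      mem_range.2 (by_contra fun hij => hni (down j hj i (by omega)))
    exact absurd ((card_le_card this).trans_eq (card_range i)) (by omega)

section Ideal

variable {U : Finset (ℕ × ℕ)}

lemma IsLowerIn.mem_of_right_mem (hU : U ⊆ shiftedDiagram (Icc 1 m))
    (hlow : IsLowerIn U (shiftedDiagram (Icc 1 m))) {i j : ℕ} (h : (i, j + 1) ∈ U) (hij : i ≤ j) :
    (i, j) ∈ U := by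
  have := mem_shiftedDiagram_Icc.1 (hU h)
  exact hlow _ (mem_shiftedDiagram_Icc.2 ⟨hij, by omega⟩) _ h (Or.inl rfl)

lemma IsLowerIn.mem_of_below_mem (hU : U ⊆ shiftedDiagram (Icc 1 m))
    (hlow : IsLowerIn U (shiftedDiagram (Icc 1 m))) {i j : ℕ} (h : (i + 1, j) ∈ U) :
    (i, j) ∈ U := by
  have := mem_shiftedDiagram_Icc.1 (hU h)
  exact hlow _ (mem_shiftedDiagram_Icc.2 (by omega)) _ h (Or.inr rfl)

def diagCount (m : ℕ) (U : Finset (ℕ × ℕ)) (d : ℕ) : ℕ := #{i ∈ range m | (i, i + d) ∈ U}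

lemma mem_iff_lt_diagCount (hU : U ⊆ shiftedDiagram (Icc 1 m))
    (hlow : IsLowerIn U (shiftedDiagram (Icc 1 m))) (i d : ℕ) :
    (i, i + d) ∈ U ↔ i < diagCount m U d := by
  rw [diagCount, ← mem_iff_lt_card_of_pred_mem, mem_filter, mem_range, iff_and_self]
  · exact fun h => by have := mem_shiftedDiagram_Icc.1 (hU h); omega
  intro i hi
  rw [mem_filter, mem_range] at hi ⊢
  refine ⟨by omega, hlow.mem_of_right_mem hU ?_ (by omega)⟩
  rw [Nat.add_right_comm]
  exact hlow.mem_of_below_mem hU hi.2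

lemma diagCount_succ_le (hU : U ⊆ shiftedDiagram (Icc 1 m))
    (hlow : IsLowerIn U (shiftedDiagram (Icc 1 m))) (d : ℕ) :
    diagCount m U (d + 1) ≤ diagCount m U d ∧ diagCount m U d ≤ diagCount m U (d + 1) + 1 := by
  have hdiag := mem_iff_lt_diagCount hU hlow
  constructor <;> by_contra! h
  · have h' := (hdiag _ (d + 1)).2 h
    exact (hdiag _ d).1 (hlow.mem_of_right_mem hU h' (by omega)) |>.false
  · have h' := (hdiag (diagCount m U (d + 1) + 1) d).2 h
    rw [show diagCount m U (d + 1) + 1 + d = diagCount m U (d + 1) + (d + 1) by omega] at h'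
    exact (hdiag _ (d + 1)).1 (hlow.mem_of_below_mem hU h') |>.false

lemma diagCount_self (hU : U ⊆ shiftedDiagram (Icc 1 m)) : diagCount m U m = 0 :=
  card_eq_zero.2 <| filter_eq_empty_iff.2 fun _ _ h => by
    have := mem_shiftedDiagram_Icc.1 (hU h)
    omega

lemma exists_eq_shiftedDiagram (hU : U ⊆ shiftedDiagram (Icc 1 m))
    (hlow : IsLowerIn U (shiftedDiagram (Icc 1 m))) : ∃ s ⊆ Icc 1 m, U = shiftedDiagram s := by
  obtain ⟨s, hs, hsc⟩ :=
    exists_partsGt_eq (diagCount m U) (diagCount_succ_le hU hlow) (diagCount_self hU)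
  refine ⟨s, hs, ?_⟩
  ext ⟨i, j⟩
  rw [mem_shiftedDiagram, hsc]
  by_cases hij : i ≤ j
  · rw [← mem_iff_lt_diagCount hU hlow, Nat.add_sub_cancel' hij]
    exact (and_iff_right hij).symm
  · exact iff_of_false (fun h => hij (mem_shiftedDiagram_Icc.1 (hU h)).1) fun h => hij h.1

end Ideal

end ShiftedDiagram

section Reflection

variable {m : ℕ} {s : Finset ℕ}

def reflect (m : ℕ) (c : ℕ × ℕ) : ℕ × ℕ := (m - 1 - c.2, m - 1 - c.1)

lemma reflect_mem {c : ℕ × ℕ} (hc : c ∈ shiftedDiagram (Icc 1 m)) :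
    reflect m c ∈ shiftedDiagram (Icc 1 m) := by
  obtain ⟨i, j⟩ := c
  rw [reflect, mem_shiftedDiagram_Icc] at *
  omega

lemma reflect_reflect {c : ℕ × ℕ} (hc : c ∈ shiftedDiagram (Icc 1 m)) :
    reflect m (reflect m c) = c := by
  obtain ⟨i, j⟩ := c
  rw [mem_shiftedDiagram_Icc] at hc
  ext <;> simp only [reflect] <;> omega

lemma nextCell_reflect {c c' : ℕ × ℕ} (hc : c ∈ shiftedDiagram (Icc 1 m))
    (hc' : c' ∈ shiftedDiagram (Icc 1 m)) (h : NextCell c c') :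
    NextCell (reflect m c') (reflect m c) := by
  obtain ⟨i, j⟩ := c
  rcases h with rfl | rfl <;> rw [mem_shiftedDiagram_Icc] at hc hc'
  · right; simp only [reflect, Prod.mk.injEq, and_true] at hc' ⊢; omega
  · left; simp only [reflect, Prod.mk.injEq, true_and] at hc' ⊢; omega

lemma mem_shiftedDiagram_Icc_sdiff (hs : s ⊆ Icc 1 m) {c : ℕ × ℕ} :
    c ∈ shiftedDiagram (Icc 1 m \ s) ↔
      c ∈ shiftedDiagram (Icc 1 m) ∧ reflect m c ∉ shiftedDiagram s := by
  obtain ⟨i, j⟩ := c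
  have := partsGt_le hs (j - i)
  simp only [reflect]
  rw [mem_shiftedDiagram, mem_shiftedDiagram, mem_shiftedDiagram, partsGt_Icc,
    partsGt_Icc_sdiff hs]
  by_cases hij : i ≤ j ∧ j < m
  · rw [show m - 1 - i - (m - 1 - j) = j - i by omega]
    omega
  · omega

lemma image_reflect_sdiff (hs : s ⊆ Icc 1 m) :
    (shiftedDiagram (Icc 1 m) \ shiftedDiagram s).image (reflect m) =
      shiftedDiagram (Icc 1 m \ s) := by
  ext c
  rw [mem_shiftedDiagram_Icc_sdiff hs, mem_image]
  constructor
  · rintro ⟨c, hc, rfl⟩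
    rw [mem_sdiff] at hc
    exact ⟨reflect_mem hc.1, by rw [reflect_reflect hc.1]; exact hc.2⟩
  · rintro ⟨hc, hc'⟩
    exact ⟨reflect m c, mem_sdiff.2 ⟨reflect_mem hc, hc'⟩, reflect_reflect hc⟩

end Reflection

section Tableaux

variable {S A B : Finset (ℕ × ℕ)} {T : ℕ × ℕ → ℕ}

lemma IsSYT.mapsTo (hT : IsSYT S T) : Set.MapsTo T S (Set.Icc 1 #S) := hT.1.mapsTo

lemma IsSYT.injOn (hT : IsSYT S T) : Set.InjOn T S := hT.1.injOn

lemma IsSYT.eq_zero (hT : IsSYT S T) {c : ℕ × ℕ} (hc : c ∉ S) : T c = 0 := hT.2.1 c hc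

lemma IsSYT.lt {c c' : ℕ × ℕ} (hT : IsSYT S T) (hc : c ∈ S) (hc' : c' ∈ S)
    (h : NextCell c c') : T c < T c' := by
  rcases h with rfl | rfl
  exacts [hT.2.2.1 c hc hc', hT.2.2.2 c hc hc']

lemma isSYT_of_injOn (hmaps : Set.MapsTo T S (Set.Icc 1 #S)) (hinj : Set.InjOn T S)
    (hzero : ∀ c ∉ S, T c = 0) (hlt : ∀ c ∈ S, ∀ c' ∈ S, NextCell c c' → T c < T c') :
    IsSYT S T := by
  refine ⟨⟨hmaps, hinj, ?_⟩, hzero, fun c hc hc' => hlt c hc _ hc' (Or.inl rfl),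
    fun c hc hc' => hlt c hc _ hc' (Or.inr rfl)⟩
  simpa using surjOn_of_injOn_of_card_le T (t := Icc 1 #S) (by simpa using hmaps) hinj (by simp)

instance (S : Finset (ℕ × ℕ)) : Finite {T : ℕ × ℕ → ℕ // IsSYT S T} := by
  refine Finite.of_injective
    (fun T (c : S) => (⟨T.1 c, Nat.lt_succ_of_le (T.2.mapsTo c.2).2⟩ : Fin (#S + 1))) ?_
  intro T T' h
  ext c
  by_cases hc : c ∈ S
  · simpa using congrFun h ⟨c, hc⟩
  · rw [T.2.eq_zero hc, T'.2.eq_zero hc]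

lemma IsSYT.card_filter_le (hT : IsSYT S T) {k : ℕ} (hk : k ≤ #S) : #{c ∈ S | T c ≤ k} = k := by
  set U : Finset (ℕ × ℕ) := {c ∈ S | T c ≤ k}
  have hmaps : Set.MapsTo T U (Icc 1 k) := fun c hc => by
    simpa [U] using ⟨(hT.mapsTo (mem_filter.1 hc).1).1, (mem_filter.1 hc).2⟩
  have hsurj : Set.SurjOn T U (Icc 1 k) := fun v hv => by
    rw [coe_Icc, Set.mem_Icc] at hv
    obtain ⟨c, hc, rfl⟩ := hT.1.surjOn (⟨hv.1, hv.2.trans hk⟩ : v ∈ Set.Icc 1 #S)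
    exact ⟨c, mem_filter.2 ⟨hc, hv.2⟩, rfl⟩
  rw [card_nbij T hmaps (hT.injOn.mono (coe_subset.2 (filter_subset _ _))) hsurj, Nat.card_Icc,
    Nat.add_sub_cancel]

lemma IsSYT.isLowerIn_filter_le (hT : IsSYT S T) (k : ℕ) : IsLowerIn {c ∈ S | T c ≤ k} S := by
  intro c hc c' hc' h
  rw [mem_filter] at hc' ⊢
  exact ⟨hc, (hT.lt hc hc'.1 h).le.trans hc'.2⟩

lemma IsSYT.restrict (hT : IsSYT S T) (hB : B ⊆ S) (a : ℕ)
    (hval : ∀ c ∈ B, a < T c ∧ T c ≤ a + #B) :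
    IsSYT B (fun c => if c ∈ B then T c - a else 0) := by
  refine isSYT_of_injOn (fun c hc => ?_) (fun c hc c' hc' h => ?_) (fun c hc => if_neg hc)
    fun c hc c' hc' h => ?_
  · have := hval c hc
    simp only [if_pos (mem_coe.1 hc), Set.mem_Icc]
    omega
  · have := hval c hc
    have := hval c' hc'
    simp only [if_pos (mem_coe.1 hc), if_pos (mem_coe.1 hc')] at h
    exact hT.injOn (hB hc) (hB hc') (by omega)
  · have := hval c hc
    have := hT.lt (hB hc) (hB hc') h
    simp only [if_pos hc, if_pos hc']
    omega

def stackTableau (A S : Finset (ℕ × ℕ)) (P R : ℕ × ℕ → ℕ) (c : ℕ × ℕ) : ℕ :=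
  if c ∈ A then P c else if c ∈ S then R c + #A else 0

section Stack

variable {P R : ℕ × ℕ → ℕ} {c : ℕ × ℕ}

lemma stackTableau_of_mem (hc : c ∈ A) : stackTableau A S P R c = P c := if_pos hc

lemma stackTableau_of_mem_sdiff (hc : c ∈ S \ A) : stackTableau A S P R c = R c + #A :=
  (if_neg (mem_sdiff.1 hc).2).trans (if_pos (mem_sdiff.1 hc).1)

lemma stackTableau_le_card_iff (hP : IsSYT A P) (hR : IsSYT (S \ A) R) (hc : c ∈ S) :
    stackTableau A S P R c ≤ #A ↔ c ∈ A := by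
  by_cases hA : c ∈ A
  · simpa [stackTableau_of_mem hA, hA] using (hP.mapsTo hA).2
  · have hc : c ∈ S \ A := mem_sdiff.2 ⟨hc, hA⟩
    have := (hR.mapsTo hc).1
    simp only [stackTableau_of_mem_sdiff hc, hA, iff_false]
    omega

lemma filter_stackTableau_le (hAS : A ⊆ S) (hP : IsSYT A P) (hR : IsSYT (S \ A) R) :
    {c ∈ S | stackTableau A S P R c ≤ #A} = A := by
  ext c
  rw [mem_filter]
  exact ⟨fun h => (stackTableau_le_card_iff hP hR h.1).1 h.2,
    fun h => ⟨hAS h, (stackTableau_le_card_iff hP hR (hAS h)).2 h⟩⟩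

lemma isSYT_stackTableau (hAS : A ⊆ S) (hlow : IsLowerIn A S) (hP : IsSYT A P)
    (hR : IsSYT (S \ A) R) : IsSYT S (stackTableau A S P R) := by
  have hle : ∀ {c}, c ∈ S → (stackTableau A S P R c ≤ #A ↔ c ∈ A) :=
    stackTableau_le_card_iff hP hR
  refine isSYT_of_injOn (fun c hc => ?_) (fun c hc c' hc' h => ?_)
    (fun c hc => (if_neg fun hA => hc (hAS hA)).trans (if_neg hc)) fun c hc c' hc' h => ?_
  · by_cases hA : c ∈ A
    · have := Set.mem_Icc.1 (hP.mapsTo hA)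
      have := card_le_card hAS
      rw [stackTableau_of_mem hA, Set.mem_Icc]
      omega
    · have hc : c ∈ S \ A := mem_sdiff.2 ⟨hc, hA⟩
      have := Set.mem_Icc.1 (hR.mapsTo hc)
      have := card_sdiff_add_card_eq_card hAS
      rw [stackTableau_of_mem_sdiff hc, Set.mem_Icc]
      omega
  · have hAA' : c ∈ A ↔ c' ∈ A := by rw [← hle hc, ← hle hc', h]
    by_cases hA : c ∈ A
    · rw [stackTableau_of_mem hA, stackTableau_of_mem (hAA'.1 hA)] at h
      exact hP.injOn hA (hAA'.1 hA) h
    · have hc : c ∈ S \ A := mem_sdiff.2 ⟨hc, hA⟩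
      have hc' : c' ∈ S \ A := mem_sdiff.2 ⟨hc', mt hAA'.2 hA⟩
      rw [stackTableau_of_mem_sdiff hc, stackTableau_of_mem_sdiff hc'] at h
      exact hR.injOn hc hc' (Nat.add_right_cancel h)
  · by_cases hA' : c' ∈ A
    · have hA := hlow c hc c' hA' h
      rw [stackTableau_of_mem hA, stackTableau_of_mem hA']
      exact hP.lt hA hA' h
    by_cases hA : c ∈ A
    · exact ((hle hc).2 hA).trans_lt (not_le.1 (mt (hle hc').1 hA'))
    · have hc : c ∈ S \ A := mem_sdiff.2 ⟨hc, hA⟩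
      have hc' : c' ∈ S \ A := mem_sdiff.2 ⟨hc', hA'⟩
      rw [stackTableau_of_mem_sdiff hc, stackTableau_of_mem_sdiff hc']
      exact Nat.add_lt_add_right (hR.lt hc hc' h) _

end Stack

end Tableaux

section Split

variable {S A : Finset (ℕ × ℕ)} {T : ℕ × ℕ → ℕ}

lemma IsSYT.restrict_filter_le (hT : IsSYT S T) (hA : {c ∈ S | T c ≤ #A} = A) :
    IsSYT A (fun c => if c ∈ A then T c else 0) := by
  have hAS : A ⊆ S := hA ▸ filter_subset _ _
  have hval : ∀ c ∈ A, 0 < T c ∧ T c ≤ 0 + #A := fun c hc => by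
    refine ⟨(hT.mapsTo (hAS hc)).1, ?_⟩
    rw [← hA] at hc
    simpa using (mem_filter.1 hc).2
  simpa using hT.restrict hAS 0 hval

lemma IsSYT.restrict_filter_gt (hT : IsSYT S T) (hA : {c ∈ S | T c ≤ #A} = A) :
    IsSYT (S \ A) (fun c => if c ∈ S \ A then T c - #A else 0) := by
  have hAS : A ⊆ S := hA ▸ filter_subset _ _
  refine hT.restrict sdiff_subset #A fun c hc => ?_
  have := (hT.mapsTo (mem_sdiff.1 hc).1).2
  have := card_sdiff_add_card_eq_card hAS
  have hcA := (mem_sdiff.1 hc).2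
  rw [← hA, mem_filter, not_and, not_le] at hcA
  exact ⟨hcA (mem_sdiff.1 hc).1, by omega⟩

def isSYTSplitEquiv (hAS : A ⊆ S) (hlow : IsLowerIn A S) :
    {T // IsSYT S T ∧ {c ∈ S | T c ≤ #A} = A} ≃ {P // IsSYT A P} × {R // IsSYT (S \ A) R} where
  toFun T := (⟨_, T.2.1.restrict_filter_le T.2.2⟩, ⟨_, T.2.1.restrict_filter_gt T.2.2⟩)
  invFun PR := ⟨stackTableau A S PR.1 PR.2, isSYT_stackTableau hAS hlow PR.1.2 PR.2.2,
    filter_stackTableau_le hAS PR.1.2 PR.2.2⟩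
  left_inv := by
    rintro ⟨T, hT, hA⟩
    ext c
    by_cases hcA : c ∈ A
    · simp [stackTableau_of_mem hcA, hcA]
    by_cases hcS : c ∈ S
    · have hc : c ∈ S \ A := mem_sdiff.2 ⟨hcS, hcA⟩
      have hlt := hcA
      rw [← hA, mem_filter, not_and, not_le] at hlt
      have := hlt hcS
      simp only [stackTableau_of_mem_sdiff hc, if_pos hc]
      omega
    · simp [stackTableau, hcA, hcS, hT.eq_zero hcS]
  right_inv := by
    rintro ⟨⟨P, hP⟩, ⟨R, hR⟩⟩
    ext c
    · by_cases hcA : c ∈ A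
      · simp [stackTableau, hcA]
      · simp [hcA, hP.eq_zero hcA]
    · by_cases hc : c ∈ S \ A
      · simp [stackTableau, hc, (mem_sdiff.1 hc).1, (mem_sdiff.1 hc).2]
      · simp [hc, hR.eq_zero hc]

lemma card_isSYT_filter_le (hAS : A ⊆ S) (hlow : IsLowerIn A S) :
    Nat.card {T // IsSYT S T ∧ {c ∈ S | T c ≤ #A} = A} = numSYT A * numSYT (S \ A) :=
  (Nat.card_congr (isSYTSplitEquiv hAS hlow)).trans (Nat.card_prod _ _)

end Split

section ReflectTableau

variable {m : ℕ} {B : Finset (ℕ × ℕ)} {R : ℕ × ℕ → ℕ}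

lemma image_reflect_subset (hB : B ⊆ shiftedDiagram (Icc 1 m)) :
    B.image (reflect m) ⊆ shiftedDiagram (Icc 1 m) :=
  image_subset_iff.2 fun _ hc => reflect_mem (hB hc)

lemma image_reflect_image (hB : B ⊆ shiftedDiagram (Icc 1 m)) :
    (B.image (reflect m)).image (reflect m) = B := by
  rw [image_image]
  exact (image_congr fun c hc => reflect_reflect (hB hc)).trans image_id

lemma card_image_reflect (hB : B ⊆ shiftedDiagram (Icc 1 m)) : #(B.image (reflect m)) = #B :=
  card_image_of_injOn fun c hc c' hc' h => by
    rw [← reflect_reflect (hB hc), ← reflect_reflect (hB hc'), h]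

/-- The anti-diagonal reflection reverses the order of the cells, so the entries are reversed. -/
lemma IsSYT.image_reflect (hB : B ⊆ shiftedDiagram (Icc 1 m)) (hR : IsSYT B R) :
    IsSYT (B.image (reflect m))
      (fun c => if c ∈ B.image (reflect m) then #B + 1 - R (reflect m c) else 0) := by
  have hmem : ∀ c ∈ B.image (reflect m), reflect m c ∈ B := fun c hc => by
    rw [← image_reflect_image hB]
    exact mem_image_of_mem _ hc
  have hbound : ∀ c ∈ B.image (reflect m), 1 ≤ R (reflect m c) ∧ R (reflect m c) ≤ #B :=
    fun c hc => hR.mapsTo (hmem c hc)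
  refine isSYT_of_injOn (fun c hc => ?_) (fun c hc c' hc' h => ?_) (fun c hc => if_neg hc)
    fun c hc c' hc' h => ?_
  · have := hbound c hc
    rw [if_pos (mem_coe.1 hc), card_image_reflect hB, Set.mem_Icc]
    omega
  · have := hbound c hc
    have := hbound c' hc'
    simp only [if_pos (mem_coe.1 hc), if_pos (mem_coe.1 hc')] at h
    have := hR.injOn (hmem c hc) (hmem c' hc') (by omega)
    rw [← reflect_reflect (image_reflect_subset hB hc),
      ← reflect_reflect (image_reflect_subset hB hc'), this]
  · have := hbound c hc
    have := hR.lt (hmem c' hc') (hmem c hc)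
      (nextCell_reflect (image_reflect_subset hB hc) (image_reflect_subset hB hc') h)
    simp only [if_pos hc, if_pos hc']
    omega

lemma numSYT_le_numSYT_image_reflect (hB : B ⊆ shiftedDiagram (Icc 1 m)) :
    numSYT B ≤ numSYT (B.image (reflect m)) := by
  refine Nat.card_le_card_of_injective (fun R => ⟨_, R.2.image_reflect hB⟩) fun R R' h => ?_
  ext c
  by_cases hc : c ∈ B
  · have hc' : reflect m c ∈ B.image (reflect m) := mem_image_of_mem _ hc
    have e := congrFun (congrArg Subtype.val h) (reflect m c)
    have := (R.2.mapsTo hc).2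
    have := (R'.2.mapsTo hc).2
    simp only [if_pos hc', reflect_reflect (hB hc)] at e
    omega
  · rw [R.2.eq_zero hc, R'.2.eq_zero hc]

lemma numSYT_image_reflect (hB : B ⊆ shiftedDiagram (Icc 1 m)) :
    numSYT (B.image (reflect m)) = numSYT B := by
  refine le_antisymm ?_ (numSYT_le_numSYT_image_reflect hB)
  simpa only [image_reflect_image hB] using
    numSYT_le_numSYT_image_reflect (image_reflect_subset hB)

end ReflectTableau

lemma card_subtype_eq_sum_card_of_existsUnique {α ι : Type*} {p : α → Prop} [Finite {a // p a}]
    (F : Finset ι) (q : α → ι → Prop) (h : ∀ a, p a → ∃! i, i ∈ F ∧ q a i) :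
    Nat.card {a // p a} = ∑ i ∈ F, Nat.card {a // p a ∧ q a i} := by
  choose f hf using fun a : {a // p a} => (h a.1 a.2).exists
  let e : {a // p a} ≃ Σ i : F, {a // p a ∧ q a i} :=
    { toFun a := ⟨⟨f a, (hf a).1⟩, a.1, a.2, (hf a).2⟩
      invFun x := ⟨x.2.1, x.2.2.1⟩
      left_inv _ := rfl
      right_inv := by
        rintro ⟨⟨i, hi⟩, a, ha, hq⟩
        obtain rfl : f ⟨a, ha⟩ = i := (h a ha).unique (hf _) ⟨hi, hq⟩
        rfl }
  have (i : F) : Finite {a // p a ∧ q a i} :=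
    Finite.of_injective (fun x => (⟨x.1, x.2.1⟩ : {a // p a})) fun _ _ hxy =>
      Subtype.ext (Subtype.mk.inj hxy)
  rw [Nat.card_congr e, Nat.card_sigma, Finset.sum_coe_sort F fun i => Nat.card {a // p a ∧ q a i}]

lemma sum_Icc_one_id (m : ℕ) : (Icc 1 m).sum id = (m + 1).choose 2 := by
  induction m with
  | zero => rfl
  | succ m ih =>
    rw [Finset.sum_Icc_succ_top (by omega), ih, Nat.choose_succ_succ (m + 1), Nat.choose_one_right,
      id, Nat.add_comm]

lemma existsUnique_shiftedDiagram_eq_filter_le {m t : ℕ} {T : ℕ × ℕ → ℕ}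
    (hT : IsSYT (shiftedDiagram (Icc 1 m)) T) (ht : t ≤ (m + 1).choose 2) :
    ∃! s, s ∈ (Icc 1 m).powerset.filter (fun s => s.sum id = t) ∧
      {c ∈ shiftedDiagram (Icc 1 m) | T c ≤ t} = shiftedDiagram s := by
  obtain ⟨s, hs, hU⟩ := exists_eq_shiftedDiagram (filter_subset _ _) (hT.isLowerIn_filter_le t)
  have hsum : s.sum id = t := by
    rw [← card_shiftedDiagram, ← hU,
      hT.card_filter_le (by rwa [card_shiftedDiagram, sum_Icc_one_id])]
  have hzero : ∀ {s'}, s' ⊆ Icc 1 m → 0 ∉ s' := fun hs' h => by simpa using hs' h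
  refine ⟨s, ⟨mem_filter.2 ⟨mem_powerset.2 hs, hsum⟩, hU⟩, fun s' ⟨hs', hU'⟩ => ?_⟩
  exact shiftedDiagram_injOn (hzero (mem_powerset.1 (mem_filter.1 hs').1)) (hzero hs)
    (hU'.symm.trans hU)

/-- `∑_{λ ⊆ [m], |λ| = t} g^λ g^{λᶜ} = g^{[m]}`. -/
theorem staircase_complement_sum (m t : ℕ) (ht : t ≤ (m + 1).choose 2) :
    ∑ s ∈ (Finset.Icc 1 m).powerset.filter (fun s => s.sum id = t),
        gF s * gF (Finset.Icc 1 m \ s)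
      = gF (Finset.Icc 1 m) := by
  have hgF (s : Finset ℕ) : gF s = numSYT (shiftedDiagram s) := rfl
  rw [hgF, numSYT, card_subtype_eq_sum_card_of_existsUnique _ _
    fun T hT => existsUnique_shiftedDiagram_eq_filter_le hT ht]
  refine Finset.sum_congr rfl fun s hs => ?_
  rw [mem_filter, mem_powerset] at hs
  obtain ⟨hs, rfl⟩ := hs
  rw [← card_shiftedDiagram, card_isSYT_filter_le (shiftedDiagram_mono hs)
    (shiftedDiagram_isLowerIn s m), hgF, hgF, ← image_reflect_sdiff hs,
    numSYT_image_reflect sdiff_subset]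
end

section
/- Let m, n, t be nonnegative with t ≤ mn, let T be a SYT of rectangular shape (n^m), let T1 consist of the cells with entries at most t, and let T2 be obtained from the remaining cells by transposing and replacing each entry i by mn - i + 1. Then T1 and T2 are SYT of partition shapes λ¹ and λ², and the set {1, 2, ..., m+n} is the disjoint union of the sets of parts of λ¹ + (m, m-1, ..., 1) and of λ² + (n, n-1, ..., 1). -/
/-!
The entries of `T` increase along rows and columns, so the cells holding at most `t` form a
Young diagram inside the rectangle. Reflecting `T` in the anti-diagonal and replacing each entry
`k` by `m * n + 1 - k` gives a standard tableau of the transposed rectangle in which the remaining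
cells are exactly those holding at most `m * n - t`; so both pieces are standard tableaux of Young
diagrams. The two diagrams are complementary: cell `(i, n - 1 - r)` lies in the first exactly when
`(r, m - 1 - i)` does not lie in the second, and this forces `λ¹ᵢ + (m - i) ≠ λ²ᵣ + (n - r)`.
The two strictly decreasing sequences take `m` and `n` values in `{1, …, m + n}`, so they
partition it.
-/

open Finset

theorem Finset.eq_range_card_of_isLowerSet {s : Finset ℕ} (hs : IsLowerSet (s : Set ℕ)) :
    s = range #s := by
  obtain hs | ⟨a, ha⟩ := hs.eq_univ_or_Iio
  · exact absurd (hs ▸ s.finite_toSet) Set.infinite_univ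
  · have : s = Iio a := coe_injective (by rw [ha, coe_Iio])
    rw [this, Nat.card_Iio, Nat.Iio_eq_range]

theorem isLowerSet_filter_le_of_monotoneOn {α β : Type*} [Preorder α] [Preorder β]
    [DecidableLE β] {s : Finset α} {f : α → β} (hs : IsLowerSet (s : Set α))
    (hf : MonotoneOn f s) (b : β) :
    IsLowerSet ((s.filter fun x => f x ≤ b : Finset α) : Set α) := by
  intro x y hyx hx
  rw [mem_coe, mem_filter] at hx ⊢
  have hy := hs hyx hx.1
  exact ⟨hy, (hf hy hx.1 hyx).trans hx.2⟩

theorem mem_shapeCells {L : List ℕ} {c : ℕ × ℕ} :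
    c ∈ shapeCells L ↔ c.1 < L.length ∧ c.2 < L.getD c.1 0 := by
  obtain ⟨i, j⟩ := c
  simp [shapeCells]

theorem mem_shapeCells_replicate {m n : ℕ} {c : ℕ × ℕ} :
    c ∈ shapeCells (List.replicate m n) ↔ c.1 < m ∧ c.2 < n := by
  rw [mem_shapeCells, List.length_replicate]
  refine and_congr_right fun hc => ?_
  rw [List.getD_eq_getElem?_getD, List.getElem?_replicate, if_pos hc, Option.getD_some]

theorem card_shapeCells_replicate (m n : ℕ) : #(shapeCells (List.replicate m n)) = m * n := by
  have : shapeCells (List.replicate m n) = range m ×ˢ range n := by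
    ext c
    simp [mem_shapeCells_replicate]
  rw [this, card_product, card_range, card_range]

theorem isLowerSet_shapeCells_replicate (m n : ℕ) :
    IsLowerSet (shapeCells (List.replicate m n) : Set (ℕ × ℕ)) := by
  intro c d hdc hc
  rw [mem_coe, mem_shapeCells_replicate] at hc ⊢
  exact ⟨hdc.1.trans_lt hc.1, hdc.2.trans_lt hc.2⟩

theorem getD_map_range {k : ℕ} (f : ℕ → ℕ) {i : ℕ} (hi : i < k) :
    ((List.range k).map f).getD i 0 = f i := by
  simp [hi]

theorem getD_map_range_antitone {k : ℕ} {f : ℕ → ℕ} (hf : Antitone f) {i j : ℕ} (hij : i ≤ j)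
    (hj : j < k) : ((List.range k).map f).getD j 0 ≤ ((List.range k).map f).getD i 0 := by
  rw [getD_map_range f hj, getD_map_range f (hij.trans_lt hj)]
  exact hf hij

noncomputable def rowLen (S : Finset (ℕ × ℕ)) (i : ℕ) : ℕ :=
  #(S.preimage (Prod.mk i) (Prod.mk_right_injective i).injOn)

section rowLen

variable {S : Finset (ℕ × ℕ)}

theorem mem_iff_lt_rowLen (hS : IsLowerSet (S : Set (ℕ × ℕ))) {i j : ℕ} :
    (i, j) ∈ S ↔ j < rowLen S i := by
  have hrow : IsLowerSet (S.preimage (Prod.mk i) (Prod.mk_right_injective i).injOn : Set ℕ) :=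
    fun _ _ hle hj => by
      rw [mem_coe, mem_preimage] at hj ⊢
      exact hS (Prod.mk_le_mk.2 ⟨le_rfl, hle⟩) hj
  rw [rowLen, ← mem_range, ← Finset.eq_range_card_of_isLowerSet hrow, mem_preimage]

theorem rowLen_antitone (hS : IsLowerSet (S : Set (ℕ × ℕ))) : Antitone (rowLen S) :=
  fun i i' hii' => card_le_card fun j hj => by
    rw [mem_preimage] at hj ⊢
    exact hS (Prod.mk_le_mk.2 ⟨hii', le_rfl⟩) hj

theorem rowLen_le {m n : ℕ} (hSR : S ⊆ shapeCells (List.replicate m n)) (i : ℕ) :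
    rowLen S i ≤ n :=
  (card_le_card fun _ hj =>
    mem_range.2 (mem_shapeCells_replicate.1 (hSR (mem_preimage.1 hj))).2).trans (card_range n).le

theorem eq_shapeCells_rowLen {m n : ℕ} (hS : IsLowerSet (S : Set (ℕ × ℕ)))
    (hSR : S ⊆ shapeCells (List.replicate m n)) :
    S = shapeCells ((List.range m).map (rowLen S)) := by
  ext ⟨i, j⟩
  rw [mem_shapeCells, List.length_map, List.length_range]
  constructor
  · intro hc
    have hi := (mem_shapeCells_replicate.1 (hSR hc)).1
    exact ⟨hi, by rwa [getD_map_range _ hi, ← mem_iff_lt_rowLen hS]⟩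
  · rintro ⟨hi, hj⟩
    rwa [getD_map_range _ hi, ← mem_iff_lt_rowLen hS] at hj

end rowLen

section IsSYT

variable {S : Finset (ℕ × ℕ)} {T : ℕ × ℕ → ℕ}

theorem IsSYT.le_of_le_snd (hT : IsSYT S T) (hS : IsLowerSet (S : Set (ℕ × ℕ))) {i j j' : ℕ}
    (hjj' : j ≤ j') (hmem : (i, j') ∈ S) : T (i, j) ≤ T (i, j') := by
  induction j', hjj' using Nat.le_induction with
  | base => rfl
  | succ k _ ih =>
    have hk : (i, k) ∈ S := hS (Prod.mk_le_mk.2 ⟨le_rfl, k.le_succ⟩) hmem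
    exact (ih hk).trans (hT.2.2.1 _ hk hmem).le

theorem IsSYT.le_of_le_fst (hT : IsSYT S T) (hS : IsLowerSet (S : Set (ℕ × ℕ))) {i i' j : ℕ}
    (hii' : i ≤ i') (hmem : (i', j) ∈ S) : T (i, j) ≤ T (i', j) := by
  induction i', hii' using Nat.le_induction with
  | base => rfl
  | succ k _ ih =>
    have hk : (k, j) ∈ S := hS (Prod.mk_le_mk.2 ⟨k.le_succ, le_rfl⟩) hmem
    exact (ih hk).trans (hT.2.2.2 _ hk hmem).le

theorem IsSYT.monotoneOn (hT : IsSYT S T) (hS : IsLowerSet (S : Set (ℕ × ℕ))) :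
    MonotoneOn T S := by
  rintro ⟨i, j⟩ - ⟨i', j'⟩ hd hcd
  have hcorner : (i, j') ∈ S := hS (Prod.mk_le_mk.2 ⟨hcd.1, le_rfl⟩) hd
  exact (hT.le_of_le_snd hS hcd.2 hcorner).trans (hT.le_of_le_fst hS hcd.1 hd)

theorem IsSYT.filter_le (hT : IsSYT S T) (t : ℕ) :
    IsSYT (S.filter fun c => T c ≤ t)
      fun c => if c ∈ S.filter (fun c => T c ≤ t) then T c else 0 := by
  set S' := S.filter fun c => T c ≤ t
  have hmaps : Set.MapsTo T S' (Icc 1 (min t #S) : Finset ℕ) := by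
    intro c hc
    rw [mem_coe, mem_filter] at hc
    rw [mem_coe, mem_Icc, le_min_iff]
    exact ⟨(hT.1.mapsTo hc.1).1, hc.2, (hT.1.mapsTo hc.1).2⟩
  have hinj : Set.InjOn T S' := hT.1.injOn.mono (coe_subset.2 (filter_subset _ _))
  have hsurj : Set.SurjOn T S' (Icc 1 (min t #S) : Finset ℕ) := by
    intro k hk
    rw [mem_coe, mem_Icc, le_min_iff] at hk
    obtain ⟨c, hc, rfl⟩ := hT.1.surjOn ⟨hk.1, hk.2.2⟩
    exact ⟨c, mem_filter.2 ⟨hc, hk.2.1⟩, rfl⟩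
  have hcard : #S' = min t #S := (card_nbij T hmaps hinj hsurj).trans (by simp)
  refine ⟨?_, fun c hc => if_neg hc, fun c hc hc' => ?_, fun c hc hc' => ?_⟩
  · rw [hcard, ← coe_Icc]
    exact Set.BijOn.congr ⟨hmaps, hinj, hsurj⟩ fun c hc => (if_pos hc).symm
  · simp only [if_pos hc, if_pos hc']
    exact hT.2.2.1 c (mem_filter.1 hc).1 (mem_filter.1 hc').1
  · simp only [if_pos hc, if_pos hc']
    exact hT.2.2.2 c (mem_filter.1 hc).1 (mem_filter.1 hc').1

end IsSYT

def antiTranspose (m n : ℕ) (c : ℕ × ℕ) : ℕ × ℕ := (n - 1 - c.2, m - 1 - c.1)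

section antiTranspose

variable {m n : ℕ} {c : ℕ × ℕ}

theorem antiTranspose_mem (hc : c ∈ shapeCells (List.replicate m n)) :
    antiTranspose m n c ∈ shapeCells (List.replicate n m) := by
  rw [mem_shapeCells_replicate] at hc ⊢
  simp only [antiTranspose]
  omega

theorem antiTranspose_antiTranspose (hc : c ∈ shapeCells (List.replicate m n)) :
    antiTranspose n m (antiTranspose m n c) = c := by
  rw [mem_shapeCells_replicate] at hc
  simp only [antiTranspose]
  ext <;> dsimp only <;> omega

theorem mem_image_antiTranspose {p : ℕ × ℕ → Prop} [DecidablePred p] :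
    c ∈ ((shapeCells (List.replicate m n)).filter p).image (antiTranspose m n) ↔
      c ∈ shapeCells (List.replicate n m) ∧ p (antiTranspose n m c) := by
  rw [mem_image]
  constructor
  · rintro ⟨d, hd, rfl⟩
    rw [mem_filter] at hd
    exact ⟨antiTranspose_mem hd.1, (antiTranspose_antiTranspose hd.1).symm ▸ hd.2⟩
  · rintro ⟨hc, hp⟩
    exact ⟨_, mem_filter.2 ⟨antiTranspose_mem hc, hp⟩, antiTranspose_antiTranspose hc⟩

theorem antiTranspose_mem_image_filter {p : ℕ × ℕ → Prop} [DecidablePred p]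
    (hc : c ∈ shapeCells (List.replicate m n)) :
    antiTranspose m n c ∈ ((shapeCells (List.replicate m n)).filter p).image (antiTranspose m n) ↔
      p c := by
  rw [mem_image_antiTranspose, antiTranspose_antiTranspose hc,
    and_iff_right (antiTranspose_mem hc)]

end antiTranspose

def rectDual (m n : ℕ) (T : ℕ × ℕ → ℕ) (c : ℕ × ℕ) : ℕ :=
  if c ∈ shapeCells (List.replicate n m) then m * n + 1 - T (antiTranspose n m c) else 0

section rectDual

variable {m n : ℕ} {T : ℕ × ℕ → ℕ}

theorem IsSYT.mem_Icc_of_mem_rect (hT : IsSYT (shapeCells (List.replicate m n)) T) {c : ℕ × ℕ}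
    (hc : c ∈ shapeCells (List.replicate m n)) : 1 ≤ T c ∧ T c ≤ m * n :=
  card_shapeCells_replicate m n ▸ hT.1.mapsTo hc

theorem rectDual_of_mem {c : ℕ × ℕ} (hc : c ∈ shapeCells (List.replicate n m)) :
    rectDual m n T c = m * n + 1 - T (antiTranspose n m c) :=
  if_pos hc

theorem IsSYT.bijOn_rectDual (hT : IsSYT (shapeCells (List.replicate m n)) T) :
    Set.BijOn (rectDual m n T) (shapeCells (List.replicate n m)) (Set.Icc 1 (m * n)) := by
  refine ⟨fun c hc => ?_, fun c hc c' hc' heq => ?_, fun k hk => ?_⟩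
  · have := hT.mem_Icc_of_mem_rect (antiTranspose_mem hc)
    rw [Set.mem_Icc, rectDual_of_mem hc]
    omega
  · have := hT.mem_Icc_of_mem_rect (antiTranspose_mem hc)
    have := hT.mem_Icc_of_mem_rect (antiTranspose_mem hc')
    rw [rectDual_of_mem hc, rectDual_of_mem hc'] at heq
    have h := hT.1.injOn (antiTranspose_mem hc) (antiTranspose_mem hc') (by omega)
    rw [← antiTranspose_antiTranspose hc, h, antiTranspose_antiTranspose hc']
  · rw [Set.mem_Icc] at hk
    obtain ⟨d, hd, hdk⟩ := hT.1.surjOn (show m * n + 1 - k ∈ Set.Icc 1 #_ by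
      rw [card_shapeCells_replicate, Set.mem_Icc]; omega)
    refine ⟨antiTranspose m n d, antiTranspose_mem hd, ?_⟩
    rw [rectDual_of_mem (antiTranspose_mem hd), antiTranspose_antiTranspose hd, hdk]
    omega

theorem IsSYT.rectDual_lt_rectDual (hT : IsSYT (shapeCells (List.replicate m n)) T)
    {c c' : ℕ × ℕ} (hc : c ∈ shapeCells (List.replicate n m))
    (hc' : c' ∈ shapeCells (List.replicate n m))
    (hlt : T (antiTranspose n m c') < T (antiTranspose n m c)) :
    rectDual m n T c < rectDual m n T c' := by
  have := hT.mem_Icc_of_mem_rect (antiTranspose_mem hc)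
  rw [rectDual_of_mem hc, rectDual_of_mem hc']
  omega

theorem isSYT_rectDual (hT : IsSYT (shapeCells (List.replicate m n)) T) :
    IsSYT (shapeCells (List.replicate n m)) (rectDual m n T) := by
  refine ⟨card_shapeCells_replicate n m ▸ mul_comm m n ▸ hT.bijOn_rectDual, fun c hc => if_neg hc,
    fun c hc hc' => hT.rectDual_lt_rectDual hc hc' ?_,
    fun c hc hc' => hT.rectDual_lt_rectDual hc hc' ?_⟩
  · rw [mem_shapeCells_replicate] at hc hc'
    have h := hT.2.2.2 (m - 1 - (c.2 + 1), n - 1 - c.1)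
      (mem_shapeCells_replicate.2 ⟨by omega, by omega⟩)
      (mem_shapeCells_replicate.2 ⟨by omega, by omega⟩)
    rwa [show m - 1 - (c.2 + 1) + 1 = m - 1 - c.2 by omega] at h
  · rw [mem_shapeCells_replicate] at hc hc'
    have h := hT.2.2.1 (m - 1 - c.2, n - 1 - (c.1 + 1))
      (mem_shapeCells_replicate.2 ⟨by omega, by omega⟩)
      (mem_shapeCells_replicate.2 ⟨by omega, by omega⟩)
    rwa [show n - 1 - (c.1 + 1) + 1 = n - 1 - c.1 by omega] at h

theorem IsSYT.image_antiTranspose_filter_lt (hT : IsSYT (shapeCells (List.replicate m n)) T)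
    (t : ℕ) :
    ((shapeCells (List.replicate m n)).filter fun c => t < T c).image (antiTranspose m n) =
      (shapeCells (List.replicate n m)).filter fun c => rectDual m n T c ≤ m * n - t := by
  ext c
  rw [mem_image_antiTranspose, mem_filter]
  refine and_congr_right fun hc => ?_
  have := hT.mem_Icc_of_mem_rect (antiTranspose_mem hc)
  rw [rectDual_of_mem hc]
  omega

theorem IsSYT.isSYT_image_antiTranspose_filter_lt
    (hT : IsSYT (shapeCells (List.replicate m n)) T) (t : ℕ) :
    IsSYT (((shapeCells (List.replicate m n)).filter fun c => t < T c).image (antiTranspose m n))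
      fun c => if c ∈ ((shapeCells (List.replicate m n)).filter fun c => t < T c).image
        (antiTranspose m n) then m * n + 1 - T (antiTranspose n m c) else 0 := by
  rw [hT.image_antiTranspose_filter_lt t]
  convert (isSYT_rectDual hT).filter_le (m * n - t) using 2 with c
  split_ifs with hc
  · exact (rectDual_of_mem (mem_filter.1 hc).1).symm
  · rfl

end rectDual

/-- The parts of `λ + (k, k-1, …, 1)` for `λ = (f 0, …, f (k-1))`. -/
def shiftedParts (k : ℕ) (f : ℕ → ℕ) : Finset ℕ :=
  ((List.range k).map fun i => f i + (k - i)).toFinset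

section shiftedParts

variable {m n k : ℕ} {f g : ℕ → ℕ}

theorem shiftedParts_eq_image : shiftedParts k f = (range k).image fun i => f i + (k - i) := by
  ext
  simp [shiftedParts]

theorem shiftedParts_congr (h : ∀ i < k, f i = g i) : shiftedParts k f = shiftedParts k g := by
  rw [shiftedParts_eq_image, shiftedParts_eq_image]
  exact image_congr fun i hi => by rw [h i (mem_range.1 hi)]

theorem card_shiftedParts (hf : AntitoneOn f (Set.Iio k)) : #(shiftedParts k f) = k := by
  have hinj : StrictAntiOn (fun i => f i + (k - i)) (Set.Iio k) := fun i hi j hj hij => by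
    have := hf hi hj hij.le
    simp only [Set.mem_Iio] at hj
    dsimp only
    omega
  rw [shiftedParts_eq_image, card_image_of_injOn (coe_range k ▸ hinj.injOn), card_range]

theorem shiftedParts_subset_Icc (hf : ∀ i < k, f i ≤ n) : shiftedParts k f ⊆ Icc 1 (k + n) := by
  rw [shiftedParts_eq_image]
  intro x hx
  obtain ⟨i, hi, rfl⟩ := mem_image.1 hx
  have := hf i (mem_range.1 hi)
  rw [mem_range] at hi
  rw [mem_Icc]
  omega

theorem disjoint_shiftedParts (hfg : ∀ i < m, ∀ r < n, n ≤ f i + r ↔ g r + i < m) :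
    Disjoint (shiftedParts m f) (shiftedParts n g) := by
  rw [shiftedParts_eq_image, shiftedParts_eq_image, disjoint_left]
  intro x hxf hxg
  obtain ⟨i, hi, rfl⟩ := mem_image.1 hxf
  obtain ⟨r, hr, he⟩ := mem_image.1 hxg
  rw [mem_range] at hi hr
  by_cases h : n ≤ f i + r
  · have := (hfg i hi r hr).1 h
    omega
  · have := mt (hfg i hi r hr).2 h
    omega

theorem shiftedParts_union_shiftedParts (hf : AntitoneOn f (Set.Iio m))
    (hg : AntitoneOn g (Set.Iio n)) (hfn : ∀ i < m, f i ≤ n) (hgm : ∀ r < n, g r ≤ m)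
    (hfg : ∀ i < m, ∀ r < n, n ≤ f i + r ↔ g r + i < m) :
    shiftedParts m f ∪ shiftedParts n g = Icc 1 (m + n) := by
  refine eq_of_subset_of_card_le
    (union_subset (shiftedParts_subset_Icc hfn) (add_comm n m ▸ shiftedParts_subset_Icc hgm)) ?_
  rw [card_union_of_disjoint (disjoint_shiftedParts hfg), card_shiftedParts hf,
    card_shiftedParts hg, Nat.card_Icc, Nat.add_sub_cancel]

end shiftedParts

section rowLen

variable {m n : ℕ} {S S' : Finset (ℕ × ℕ)}

theorem le_rowLen_add_iff (hS : IsLowerSet (S : Set (ℕ × ℕ)))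
    (hS' : IsLowerSet (S' : Set (ℕ × ℕ)))
    (hSS' : ∀ c ∈ shapeCells (List.replicate m n), c ∈ S ↔ antiTranspose m n c ∉ S')
    {i r : ℕ} (hi : i < m) (hr : r < n) : n ≤ rowLen S i + r ↔ rowLen S' r + i < m := by
  have h := hSS' (i, n - 1 - r) (mem_shapeCells_replicate.2 ⟨hi, by omega⟩)
  simp only [antiTranspose, show n - 1 - (n - 1 - r) = r by omega] at h
  rw [mem_iff_lt_rowLen hS, mem_iff_lt_rowLen hS'] at h
  constructor
  · intro hle
    have := h.1 (by omega)
    omega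
  · intro hlt
    have := h.2 (by omega)
    omega

theorem disjoint_shiftedParts_rowLen (hS : IsLowerSet (S : Set (ℕ × ℕ)))
    (hS' : IsLowerSet (S' : Set (ℕ × ℕ)))
    (hSS' : ∀ c ∈ shapeCells (List.replicate m n), c ∈ S ↔ antiTranspose m n c ∉ S') :
    Disjoint (shiftedParts m (rowLen S)) (shiftedParts n (rowLen S')) :=
  disjoint_shiftedParts fun _ hi _ hr => le_rowLen_add_iff hS hS' hSS' hi hr

theorem shiftedParts_rowLen_union (hS : IsLowerSet (S : Set (ℕ × ℕ)))
    (hS' : IsLowerSet (S' : Set (ℕ × ℕ))) (hSR : S ⊆ shapeCells (List.replicate m n))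
    (hS'R : S' ⊆ shapeCells (List.replicate n m))
    (hSS' : ∀ c ∈ shapeCells (List.replicate m n), c ∈ S ↔ antiTranspose m n c ∉ S') :
    shiftedParts m (rowLen S) ∪ shiftedParts n (rowLen S') = Icc 1 (m + n) :=
  shiftedParts_union_shiftedParts ((rowLen_antitone hS).antitoneOn _)
    ((rowLen_antitone hS').antitoneOn _) (fun i _ => rowLen_le hSR i)
    (fun r _ => rowLen_le hS'R r) fun _ hi _ hr => le_rowLen_add_iff hS hS' hSS' hi hr

end rowLen

theorem rectangle_split_general (m n t : ℕ)
    (T : ℕ × ℕ → ℕ) (hT : IsSYT (shapeCells (List.replicate m n)) T)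
    (S1 S2 : Finset (ℕ × ℕ)) (T1 T2 : ℕ × ℕ → ℕ)
    (hS1 : S1 = (shapeCells (List.replicate m n)).filter fun c => T c ≤ t)
    (hS2 : S2 = ((shapeCells (List.replicate m n)).filter fun c => t < T c).image
        fun c => (n - 1 - c.2, m - 1 - c.1))
    (hT1 : T1 = fun c => if c ∈ S1 then T c else 0)
    (hT2 : T2 = fun c =>
        if c ∈ S2 then m * n + 1 - T (m - 1 - c.2, n - 1 - c.1) else 0) :
    ∃ L1 L2 : List ℕ, L1.length = m ∧ L2.length = n ∧
      (∀ i j, i ≤ j → j < m → L1.getD j 0 ≤ L1.getD i 0) ∧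
      (∀ i j, i ≤ j → j < n → L2.getD j 0 ≤ L2.getD i 0) ∧
      S1 = shapeCells L1 ∧ S2 = shapeCells L2 ∧
      IsSYT S1 T1 ∧ IsSYT S2 T2 ∧
      Disjoint (((List.range m).map fun i => L1.getD i 0 + (m - i)).toFinset)
               (((List.range n).map fun i => L2.getD i 0 + (n - i)).toFinset) ∧
      (((List.range m).map fun i => L1.getD i 0 + (m - i)).toFinset) ∪
          (((List.range n).map fun i => L2.getD i 0 + (n - i)).toFinset)
        = Finset.Icc 1 (m + n) := by
  replace hS2 : S2 = ((shapeCells (List.replicate m n)).filter fun c => t < T c).image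
      (antiTranspose m n) := hS2
  have hS2dual := hS2.trans (hT.image_antiTranspose_filter_lt t)
  have hR := isLowerSet_shapeCells_replicate
  have hS1low : IsLowerSet (S1 : Set (ℕ × ℕ)) :=
    hS1 ▸ isLowerSet_filter_le_of_monotoneOn (hR m n) (hT.monotoneOn (hR m n)) t
  have hS2low : IsLowerSet (S2 : Set (ℕ × ℕ)) := hS2dual ▸
    isLowerSet_filter_le_of_monotoneOn (hR n m) ((isSYT_rectDual hT).monotoneOn (hR n m)) _
  have hS1R : S1 ⊆ shapeCells (List.replicate m n) := hS1 ▸ filter_subset _ _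
  have hS2R : S2 ⊆ shapeCells (List.replicate n m) := hS2dual ▸ filter_subset _ _
  have hcompl : ∀ c ∈ shapeCells (List.replicate m n), c ∈ S1 ↔ antiTranspose m n c ∉ S2 :=
    fun c hc => by
      rw [hS1, hS2, antiTranspose_mem_image_filter hc, mem_filter, not_lt, and_iff_right hc]
  have hL1 := shiftedParts_congr fun i (hi : i < m) => getD_map_range (rowLen S1) hi
  have hL2 := shiftedParts_congr fun r (hr : r < n) => getD_map_range (rowLen S2) hr
  refine ⟨(List.range m).map (rowLen S1), (List.range n).map (rowLen S2), by simp, by simp,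
    fun _ _ => getD_map_range_antitone (rowLen_antitone hS1low),
    fun _ _ => getD_map_range_antitone (rowLen_antitone hS2low),
    eq_shapeCells_rowLen hS1low hS1R, eq_shapeCells_rowLen hS2low hS2R,
    hT1 ▸ hS1 ▸ hT.filter_le t, hT2 ▸ hS2 ▸ hT.isSYT_image_antiTranspose_filter_lt t, ?_, ?_⟩
  · have := disjoint_shiftedParts_rowLen hS1low hS2low hcompl
    rwa [← hL1, ← hL2] at this
  · have := shiftedParts_rowLen_union hS1low hS2low hS1R hS2R hcompl
    rwa [← hL1, ← hL2] at this

/-- splitting a rectangular SYT at value `t` produces two SYT of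
partition shapes `λ¹`, `λ²` with `{1,…,m+n}` the disjoint union of the parts of
`λ¹ + (m,…,1)` and `λ² + (n,…,1)`. -/
theorem rectangle_split (m n t : ℕ) (ht : t ≤ m * n)
    (T : ℕ × ℕ → ℕ) (hT : IsSYT (shapeCells (List.replicate m n)) T)
    (S1 S2 : Finset (ℕ × ℕ)) (T1 T2 : ℕ × ℕ → ℕ)
    (hS1 : S1 = (shapeCells (List.replicate m n)).filter fun c => T c ≤ t)
    (hS2 : S2 = ((shapeCells (List.replicate m n)).filter fun c => t < T c).image
        fun c => (n - 1 - c.2, m - 1 - c.1))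
    (hT1 : T1 = fun c => if c ∈ S1 then T c else 0)
    (hT2 : T2 = fun c =>
        if c ∈ S2 then m * n + 1 - T (m - 1 - c.2, n - 1 - c.1) else 0) :
    ∃ L1 L2 : List ℕ, L1.length = m ∧ L2.length = n ∧
      (∀ i j, i ≤ j → j < m → L1.getD j 0 ≤ L1.getD i 0) ∧
      (∀ i j, i ≤ j → j < n → L2.getD j 0 ≤ L2.getD i 0) ∧
      S1 = shapeCells L1 ∧ S2 = shapeCells L2 ∧
      IsSYT S1 T1 ∧ IsSYT S2 T2 ∧
      Disjoint (((List.range m).map fun i => L1.getD i 0 + (m - i)).toFinset)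
               (((List.range n).map fun i => L2.getD i 0 + (n - i)).toFinset) ∧
      (((List.range m).map fun i => L1.getD i 0 + (m - i)).toFinset) ∪
          (((List.range n).map fun i => L2.getD i 0 + (n - i)).toFinset)
        = Finset.Icc 1 (m + n) :=
  rectangle_split_general m n t T hT S1 S2 T1 T2 hS1 hS2 hT1 hT2
end
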